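/- Suppose z ∈ ℝ^k satisfies ‖r‖ ≤ (R/4)‖z − z*‖ and ‖z − z*‖ ≥ 16 β² ‖z*‖ / R², and suppose β² ≤ R²/8. Then f(z) ≤ f(z*) − (R²/(4β²)) ‖z − z*‖². -/

import Mathlib

/-!
Write `D = ‖z - z*‖`. After multiplying by `β²`, the claim compares the prior term
`β² (‖z*‖² - ‖z‖²)` with the gain `‖G z - x‖² - ‖r‖²` in the likelihood term. Since
`G z - x = (G z - G z*) - r` with `‖G z - G z*‖ ≥ R D` and `‖r‖ ≤ R D / 4`, the gain is at least
`R² D² / 2`. The prior term is at most `2 β² ‖z*‖ D`, which the far-away assumption bounds by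
`R² D² / 8`; this leaves `R² D² / 4` to spare.
-/

section SeminormedAddCommGroup

variable {E : Type*} [SeminormedAddCommGroup E]

theorem sq_norm_sub_sq_norm_le (a b : E) :
    ‖a‖ ^ 2 - ‖b‖ ^ 2 ≤ 2 * ‖a‖ * ‖b - a‖ - ‖b - a‖ ^ 2 := by
  have h : |‖a‖ - ‖b - a‖| ≤ |‖b‖| := by
    simpa [norm_sub_rev a b] using abs_norm_sub_norm_le a (a - b)
  nlinarith [sq_le_sq.mpr h]

theorem half_sq_le_sq_norm_sub_sub_sq_norm {u r : E} {s : ℝ} (hu : s ≤ ‖u‖)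
    (hr : ‖r‖ ≤ s / 4) : s ^ 2 / 2 ≤ ‖u - r‖ ^ 2 - ‖r‖ ^ 2 := by
  have hur : 3 * s / 4 ≤ ‖u - r‖ := by linarith [norm_sub_norm_le u r]
  have hs : 0 ≤ 3 * s / 4 := by linarith [norm_nonneg r]
  nlinarith [pow_le_pow_left₀ hs hur 2, pow_le_pow_left₀ (norm_nonneg r) hr 2]

end SeminormedAddCommGroup

theorem log_density_quadratic_decay_general
    (k d : ℕ)
    (G : EuclideanSpace ℝ (Fin k) → EuclideanSpace ℝ (Fin d))
    (R β : ℝ) (hR : 0 < R) (hβ : 0 < β)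
    (hG : ∀ z z' : EuclideanSpace ℝ (Fin k), ‖G z - G z'‖ ≥ R * ‖z - z'‖)
    (zstar : EuclideanSpace ℝ (Fin k)) (r : EuclideanSpace ℝ (Fin d))
    (x : EuclideanSpace ℝ (Fin d)) (hx : x = G zstar + r)
    (f : EuclideanSpace ℝ (Fin k) → ℝ)
    (hf : ∀ z, f z = -‖z‖ ^ 2 - ‖G z - x‖ ^ 2 / β ^ 2)
    (z : EuclideanSpace ℝ (Fin k))
    (hr : ‖r‖ ≤ (R / 4) * ‖z - zstar‖)
    (hzfar : ‖z - zstar‖ ≥ 16 * β ^ 2 * ‖zstar‖ / R ^ 2) :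
    f z ≤ f zstar - (R ^ 2 / (4 * β ^ 2)) * ‖z - zstar‖ ^ 2 := by
  set D := ‖z - zstar‖
  have hgain : (R * D) ^ 2 / 2 ≤ ‖G z - x‖ ^ 2 - ‖r‖ ^ 2 := by
    rw [hx, ← sub_sub]
    exact half_sq_le_sq_norm_sub_sub_sq_norm (hG z zstar) (by linarith)
  have hfar : 16 * β ^ 2 * ‖zstar‖ ≤ D * R ^ 2 := (div_le_iff₀ (by positivity)).mp hzfar.le
  have hprior : β ^ 2 * (‖zstar‖ ^ 2 - ‖z‖ ^ 2) ≤ R ^ 2 * D ^ 2 / 8 :=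
    calc β ^ 2 * (‖zstar‖ ^ 2 - ‖z‖ ^ 2) ≤ β ^ 2 * (2 * ‖zstar‖ * D - D ^ 2) :=
          mul_le_mul_of_nonneg_left (sq_norm_sub_sq_norm_le zstar z) (sq_nonneg β)
      _ ≤ 16 * β ^ 2 * ‖zstar‖ * D / 8 := by nlinarith [sq_nonneg (β * D)]
      _ ≤ D * R ^ 2 * D / 8 := by gcongr
      _ = R ^ 2 * D ^ 2 / 8 := by ring
  have hGzstar : ‖G zstar - x‖ = ‖r‖ := by rw [hx, sub_add_cancel_left, norm_neg]
  have hdiff : f zstar - R ^ 2 / (4 * β ^ 2) * D ^ 2 - f z =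
      (‖G z - x‖ ^ 2 - ‖r‖ ^ 2 - β ^ 2 * (‖zstar‖ ^ 2 - ‖z‖ ^ 2) - R ^ 2 / 4 * D ^ 2) / β ^ 2 := by
    rw [hf, hf, hGzstar]
    field_simp
    ring
  rw [← sub_nonneg, hdiff]
  exact div_nonneg (by nlinarith) (sq_nonneg β)

theorem log_density_quadratic_decay
    (k d : ℕ)
    (G : EuclideanSpace ℝ (Fin k) → EuclideanSpace ℝ (Fin d))
    (R β : ℝ) (hR : 0 < R) (hβ : 0 < β)
    (hG : ∀ z z' : EuclideanSpace ℝ (Fin k), ‖G z - G z'‖ ≥ R * ‖z - z'‖)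
    (zstar : EuclideanSpace ℝ (Fin k)) (r : EuclideanSpace ℝ (Fin d))
    (x : EuclideanSpace ℝ (Fin d)) (hx : x = G zstar + r)
    (f : EuclideanSpace ℝ (Fin k) → ℝ)
    (hf : ∀ z, f z = -‖z‖ ^ 2 - ‖G z - x‖ ^ 2 / β ^ 2)
    (z : EuclideanSpace ℝ (Fin k))
    (hr : ‖r‖ ≤ (R / 4) * ‖z - zstar‖)
    (hzfar : ‖z - zstar‖ ≥ 16 * β ^ 2 * ‖zstar‖ / R ^ 2)
    (hβsmall : β ^ 2 ≤ R ^ 2 / 8) :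
    f z ≤ f zstar - (R ^ 2 / (4 * β ^ 2)) * ‖z - zstar‖ ^ 2 :=
  log_density_quadratic_decay_general k d G R β hR hβ hG zstar r x hx f hf z hr hzfar
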